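/- arXiv:1209.0945 — 4 statements merged into one kernel-verified Lean document; each statement's English description precedes it below -/
import Mathlib

section
/- Let r > 0 and let h : ℝ^d → ℂ be continuous. If there exist ε > 0 and K > 0 such that |h(x)| ≤ K·exp(−ε|x|^{1/r}) for all x, then there exist C > 0 and K' > 0 such that |x^α h(x)| ≤ K'·C^{|α|}(α!)^r for all x ∈ ℝ^d and all multi-indices α ∈ ℕ^d; in fact one may take C = (rd/ε)^r. -/
/-!
With `s = t ^ (1 / r)` one has `t ^ n = s ^ (r n)`, and `s ^ a * exp (-ε s)` is maximal at
`s = a / ε`, so `t ^ n ≤ (r n / (ε e)) ^ (r n) * exp (ε s) ≤ ((r / ε) ^ r) ^ n * (n !) ^ r * exp (ε s)`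
by `(n / e) ^ n ≤ n !`. Giving each of the `d` coordinates the decay rate `ε / d` and multiplying,
`|x ^ α| ≤ C ^ |α| * (α !) ^ r * exp (ε ‖x‖ ^ (1 / r))`, and the decay of `h` cancels the exponential.
-/

open Real Nat

lemma div_exp_one_pow_le_factorial (n : ℕ) : ((n : ℝ) / exp 1) ^ n ≤ n ! := by
  have h := pow_div_factorial_le_exp (n : ℝ) n.cast_nonneg n
  rw [div_le_iff₀ (by positivity), ← exp_one_pow] at h
  rw [div_pow, div_le_iff₀ (by positivity), mul_comm]
  exact h

lemma rpow_le_div_mul_exp_one_rpow_mul_exp {a ε s : ℝ} (ha : 0 ≤ a) (hε : 0 < ε) (hs : 0 ≤ s) :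
    s ^ a ≤ (a / (ε * exp 1)) ^ a * exp (ε * s) := by
  rcases ha.eq_or_lt with rfl | ha
  · simpa using one_le_exp (by positivity)
  have hu : ε * s / a * exp 1 ≤ exp (ε * s / a) := by
    simpa [exp_sub, le_div_iff₀ (exp_pos 1)] using add_one_le_exp (ε * s / a - 1)
  calc s ^ a = (a / (ε * exp 1) * (ε * s / a * exp 1)) ^ a := by field_simp
    _ = (a / (ε * exp 1)) ^ a * (ε * s / a * exp 1) ^ a := mul_rpow (by positivity) (by positivity)
    _ ≤ (a / (ε * exp 1)) ^ a * exp (ε * s / a) ^ a := by gcongr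
    _ = (a / (ε * exp 1)) ^ a * exp (ε * s) := by rw [← exp_mul, div_mul_cancel₀ _ ha.ne']

lemma pow_le_factorial_rpow_mul_exp {r ε t : ℝ} (hr : 0 < r) (hε : 0 < ε) (n : ℕ) (ht : 0 ≤ t) :
    t ^ n ≤ ((r / ε) ^ r) ^ n * (n ! : ℝ) ^ r * exp (ε * t ^ (1 / r)) := by
  have hpow : t ^ n = (t ^ (1 / r)) ^ (r * n) := by
    rw [← rpow_mul ht, show 1 / r * (r * n) = n by field_simp, rpow_natCast]
  have hconst : (r * n / (ε * exp 1)) ^ (r * n) =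
      ((r / ε) ^ r) ^ n * (((n : ℝ) / exp 1) ^ n) ^ r := by
    rw [show r * n / (ε * exp 1) = r / ε * (n / exp 1) by field_simp,
      mul_rpow (by positivity) (by positivity), rpow_mul_natCast (by positivity),
      mul_comm r, rpow_natCast_mul (by positivity)]
  calc t ^ n ≤ (r * n / (ε * exp 1)) ^ (r * n) * exp (ε * t ^ (1 / r)) := by
        rw [hpow]; exact rpow_le_div_mul_exp_one_rpow_mul_exp (by positivity) hε (by positivity)
    _ ≤ ((r / ε) ^ r) ^ n * (n ! : ℝ) ^ r * exp (ε * t ^ (1 / r)) := by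
        rw [hconst]; gcongr; exact div_exp_one_pow_le_factorial n

lemma pow_sum_le_prod_factorial_rpow_mul_exp {ι : Type*} [Fintype ι] {r ε t : ℝ}
    (hr : 0 < r) (hε : 0 < ε) (α : ι → ℕ) (ht : 0 ≤ t) :
    t ^ (∑ i, α i) ≤ ((r * Fintype.card ι / ε) ^ r) ^ (∑ i, α i) * (∏ i, ((α i) ! : ℝ)) ^ r *
      exp (ε * t ^ (1 / r)) := by
  rcases isEmpty_or_nonempty ι with hι | hι
  · simpa using one_le_exp (by positivity)
  have hc : 0 < (Fintype.card ι : ℝ) := by positivity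
  calc t ^ (∑ i, α i) = ∏ i, t ^ α i := (Finset.prod_pow_eq_pow_sum _ _ _).symm
    _ ≤ ∏ i, ((r / (ε / Fintype.card ι)) ^ r) ^ α i * ((α i) ! : ℝ) ^ r *
          exp (ε / Fintype.card ι * t ^ (1 / r)) := by
        gcongr with i
        exact pow_le_factorial_rpow_mul_exp hr (by positivity) (α i) ht
    _ = ((r * Fintype.card ι / ε) ^ r) ^ (∑ i, α i) * (∏ i, ((α i) ! : ℝ)) ^ r *
          exp (ε * t ^ (1 / r)) := by
        rw [Finset.prod_mul_distrib, Finset.prod_mul_distrib, Finset.prod_pow_eq_pow_sum,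
          finsetProd_rpow _ _ (fun i _ => by positivity), Finset.prod_const, ← exp_nat_mul,
          div_div_eq_mul_div, Finset.card_univ, ← mul_assoc, mul_div_cancel₀ _ hc.ne']

lemma abs_prod_pow_le_norm_pow_sum {ι : Type*} [Fintype ι] {p : ENNReal} [Fact (1 ≤ p)]
    (x : PiLp p (fun _ : ι => ℝ)) (α : ι → ℕ) : |∏ i, x i ^ α i| ≤ ‖x‖ ^ (∑ i, α i) := by
  rw [Finset.abs_prod, ← Finset.prod_pow_eq_pow_sum]
  gcongr with i
  rw [abs_pow]
  gcongr
  exact PiLp.norm_apply_le x i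

theorem decay_implies_moment_bounds_general (d : ℕ) (r : ℝ) (hr : 0 < r)
    (h : EuclideanSpace ℝ (Fin d) → ℂ)
    (ε K : ℝ) (hε : 0 < ε) (hK : 0 < K)
    (hb : ∀ x : EuclideanSpace ℝ (Fin d), ‖h x‖ ≤ K * Real.exp (-ε * ‖x‖ ^ (1 / r))) :
    ∃ K' > 0, ∀ (x : EuclideanSpace ℝ (Fin d)) (α : Fin d → ℕ),
      |∏ j, x j ^ α j| * ‖h x‖ ≤
        K' * ((r * d / ε) ^ (r : ℝ)) ^ (∑ j, α j) * (∏ j, (Nat.factorial (α j) : ℝ)) ^ (r : ℝ) := by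
  refine ⟨K, hK, fun x α => ?_⟩
  have hmoment := pow_sum_le_prod_factorial_rpow_mul_exp hr hε α (norm_nonneg x)
  rw [Fintype.card_fin] at hmoment
  set s := ‖x‖ ^ (1 / r)
  calc |∏ j, x j ^ α j| * ‖h x‖ ≤ ‖x‖ ^ (∑ j, α j) * (K * exp (-ε * s)) :=
        mul_le_mul (abs_prod_pow_le_norm_pow_sum x α) (hb x) (norm_nonneg _) (by positivity)
    _ ≤ ((r * d / ε) ^ r) ^ (∑ j, α j) * (∏ j, ((α j) ! : ℝ)) ^ r * exp (ε * s) *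
          (K * exp (-ε * s)) := mul_le_mul_of_nonneg_right hmoment (by positivity)
    _ = K * ((r * d / ε) ^ r) ^ (∑ j, α j) * (∏ j, ((α j) ! : ℝ)) ^ r := by
        rw [neg_mul, exp_neg]; field_simp

/-- If a continuous `h : ℝ^d → ℂ` satisfies `|h(x)| ≤ K exp(-ε |x|^{1/r})`, then
`|x^α h(x)| ≤ K' C^{|α|} (α!)^r` with `C = (r d / ε)^r`. -/
theorem decay_implies_moment_bounds (d : ℕ) (r : ℝ) (hr : 0 < r)
    (h : EuclideanSpace ℝ (Fin d) → ℂ) (hc : Continuous h)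
    (ε K : ℝ) (hε : 0 < ε) (hK : 0 < K)
    (hb : ∀ x : EuclideanSpace ℝ (Fin d), ‖h x‖ ≤ K * Real.exp (-ε * ‖x‖ ^ (1 / r))) :
    ∃ K' > 0, ∀ (x : EuclideanSpace ℝ (Fin d)) (α : Fin d → ℕ),
      |∏ j, x j ^ α j| * ‖h x‖ ≤
        K' * ((r * d / ε) ^ (r : ℝ)) ^ (∑ j, α j) * (∏ j, (Nat.factorial (α j) : ℝ)) ^ (r : ℝ) :=
  decay_implies_moment_bounds_general d r hr h ε K hε hK hb
end

section
/- Let r > 0 and let h : ℝ^d → ℂ be continuous. If there exist C > 0 and K > 0 such that |x^α h(x)| ≤ K·C^{|α|}(α!)^r for all x ∈ ℝ^d and all multi-indices α, then for every ε with 0 < ε < r(dC)^{−1/r} there exists K' > 0 such that |h(x)| ≤ K'·exp(−ε|x|^{1/r}) for all x ∈ ℝ^d. -/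
/-!
Taking `α = n • e_j` for a coordinate `j` where `|x_j|` is maximal gives
`‖x‖ⁿ ‖h x‖ ≤ K (dC)ⁿ (n!)^r` for every `n`. With `u = (‖x‖ / (dC))^(1/r)` this reads
`‖h x‖ ≤ K (n! / uⁿ)^r`, and `n = ⌊u⌋` together with the Stirling upper bound
`n! ≤ e (n + 1) (n / e)ⁿ` gives `‖h x‖ ≤ K e^(2r) (u + 1)^r e^(-ru)`. Since `ε (dC)^(1/r) < r`,
the factor `(u + 1)^r` is absorbed by `e^(-(r - ε (dC)^(1/r)) u)`, and what is left is
`e^(-ε ‖x‖^(1/r))`.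
-/

open Real
open scoped Nat

theorem factorial_le_exp_one_mul_succ_mul_pow (n : ℕ) :
    (n ! : ℝ) ≤ exp 1 * (n + 1) * (n / exp 1) ^ n := by
  cases n with
  | zero => simp [one_le_exp zero_le_one]
  | succ m =>
    set N : ℝ := ((m + 1 : ℕ) : ℝ)
    have hseq : Stirling.stirlingSeq (m + 1) ≤ exp 1 / √2 := by
      simpa using Stirling.stirlingSeq'_antitone (Nat.zero_le m)
    have hsqrt : √(2 * N) ≤ √2 * (N + 1) := by
      rw [Real.sqrt_mul zero_le_two]
      gcongr
      exact (Real.sqrt_le_left (by positivity)).mpr (by nlinarith)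
    have hpos : 0 < √(2 * N) * (N / exp 1) ^ (m + 1) := by positivity
    calc (((m + 1) ! : ℕ) : ℝ)
          = Stirling.stirlingSeq (m + 1) * (√(2 * N) * (N / exp 1) ^ (m + 1)) := by
          rw [Stirling.stirlingSeq, div_mul_cancel₀ _ hpos.ne']
      _ ≤ exp 1 / √2 * (√2 * (N + 1) * (N / exp 1) ^ (m + 1)) := by gcongr
      _ = exp 1 * (N + 1) * (N / exp 1) ^ (m + 1) := by field_simp

theorem factorial_floor_le {u : ℝ} (hu : 0 ≤ u) :
    (⌊u⌋₊ ! : ℝ) ≤ exp 2 * (u + 1) * exp (-u) * u ^ ⌊u⌋₊ := by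
  set n := ⌊u⌋₊
  have hnu : (n : ℝ) ≤ u := Nat.floor_le hu
  have hexp : exp (-n) ≤ exp (1 - u) := exp_le_exp.mpr (by linarith [Nat.lt_floor_add_one u])
  calc (n ! : ℝ) ≤ exp 1 * (n + 1) * (n / exp 1) ^ n := factorial_le_exp_one_mul_succ_mul_pow n
    _ = exp 1 * (n + 1) * exp (-n) * (n : ℝ) ^ n := by
        rw [div_pow, ← exp_nat_mul, mul_one, exp_neg]; ring
    _ ≤ exp 1 * (u + 1) * exp (1 - u) * u ^ n := by gcongr
    _ = exp 2 * (u + 1) * exp (-u) * u ^ n := by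
        rw [sub_eq_add_neg, exp_add, show (2 : ℝ) = 1 + 1 by norm_num, exp_add]; ring

theorem rpow_le_mul_exp {r δ u : ℝ} (hr : 0 < r) (hδ : 0 < δ) (hu : 0 ≤ u) :
    u ^ r ≤ (r / δ) ^ r * exp (δ * u - r) := by
  -- `y ≤ e^(y - 1)` at `y = δu / r`
  have hlin : δ * u / r ≤ exp (δ * u / r - 1) := by linarith [add_one_le_exp (δ * u / r - 1)]
  calc u ^ r = (r / δ) ^ r * (δ * u / r) ^ r := by
        rw [← mul_rpow (by positivity) (by positivity)]; congr 1; field_simp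
    _ ≤ (r / δ) ^ r * exp (δ * u / r - 1) ^ r := by gcongr
    _ = (r / δ) ^ r * exp (δ * u - r) := by
        rw [← exp_mul]; congr 2; field_simp

theorem le_of_forall_rpow_pow_mul_le {r K u b : ℝ} (hr : 0 ≤ r) (hK : 0 ≤ K) (hu : 0 ≤ u)
    (hb : ∀ n : ℕ, (u ^ n) ^ r * b ≤ K * (n ! : ℝ) ^ r) :
    b ≤ K * (exp 2 * (u + 1) * exp (-u)) ^ r := by
  set n := ⌊u⌋₊
  have hun : 0 < u ^ n := by
    rcases hu.eq_or_lt with rfl | hu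
    · simp [n]
    · positivity
  refine le_of_mul_le_mul_left ?_ (rpow_pos_of_pos hun r)
  calc (u ^ n) ^ r * b ≤ K * (n ! : ℝ) ^ r := hb n
    _ ≤ K * (exp 2 * (u + 1) * exp (-u) * u ^ n) ^ r := by
        gcongr; exact factorial_floor_le hu
    _ = (u ^ n) ^ r * (K * (exp 2 * (u + 1) * exp (-u)) ^ r) := by
        rw [mul_rpow (by positivity) hun.le]; ring

theorem exists_le_mul_exp_of_forall_pow_mul_le {r D K ε : ℝ} (hr : 0 < r) (hD : 0 < D)
    (hK : 0 < K) (hε : ε < r * D ^ (-(1 / r))) :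
    ∃ K' > 0, ∀ t b : ℝ, 0 ≤ t → (∀ n : ℕ, t ^ n * b ≤ K * D ^ n * (n ! : ℝ) ^ r) →
      b ≤ K' * exp (-ε * t ^ (1 / r)) := by
  set A := D ^ (1 / r)
  have hA : 0 < A := rpow_pos_of_pos hD _
  set δ := r - ε * A
  have hδ : 0 < δ := by
    have : r * D ^ (-(1 / r)) * A = r := by
      rw [mul_assoc, ← rpow_add hD, neg_add_cancel, rpow_zero, mul_one]
    nlinarith
  refine ⟨K * (r / δ) ^ r * exp (δ + r), by positivity, fun t b ht hb => ?_⟩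
  set u := (t / D) ^ (1 / r)
  have hu : 0 ≤ u := by positivity
  have hur : u ^ r = t / D := by
    rw [← rpow_mul (by positivity), one_div_mul_cancel hr.ne', rpow_one]
  have hAu : A * u = t ^ (1 / r) := by
    rw [← mul_rpow hD.le (by positivity), mul_div_cancel₀ _ hD.ne']
  have hmoment : ∀ n : ℕ, (u ^ n) ^ r * b ≤ K * (n ! : ℝ) ^ r := by
    intro n
    have hpow : (u ^ n) ^ r = t ^ n / D ^ n := by
      rw [← rpow_natCast, ← rpow_mul hu, mul_comm, rpow_mul hu, hur, rpow_natCast, div_pow]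
    rw [hpow, div_mul_eq_mul_div, div_le_iff₀ (by positivity)]
    linarith [hb n]
  calc b ≤ K * (exp 2 * (u + 1) * exp (-u)) ^ r :=
        le_of_forall_rpow_pow_mul_le hr.le hK.le hu hmoment
    _ = K * exp (2 * r) * (u + 1) ^ r * exp (-(r * u)) := by
        rw [mul_rpow (by positivity) (by positivity), mul_rpow (by positivity) (by positivity),
          ← exp_mul, ← exp_mul]; ring_nf
    _ ≤ K * exp (2 * r) * ((r / δ) ^ r * exp (δ * (u + 1) - r)) * exp (-(r * u)) := by
        gcongr; exact rpow_le_mul_exp hr hδ (by positivity)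
    _ = K * (r / δ) ^ r * (exp (2 * r) * exp (δ * (u + 1) - r) * exp (-(r * u))) := by ring
    _ = K * (r / δ) ^ r * (exp (δ + r) * exp (-ε * (A * u))) := by
        rw [← exp_add, ← exp_add, ← exp_add]; congr 2; simp only [δ]; ring
    _ = K * (r / δ) ^ r * exp (δ + r) * exp (-ε * t ^ (1 / r)) := by rw [hAu]; ring

theorem EuclideanSpace.norm_le_card_mul_abs {ι : Type*} [Fintype ι] (x : EuclideanSpace ℝ ι)
    {j : ι} (hj : ∀ i, |x i| ≤ |x j|) : ‖x‖ ≤ Fintype.card ι * |x j| := by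
  have hcard : (1 : ℝ) ≤ Fintype.card ι := by exact_mod_cast Fintype.card_pos_iff.mpr ⟨j⟩
  have hsum : ∑ i, ‖x i‖ ^ 2 ≤ Fintype.card ι * |x j| ^ 2 := by
    simpa only [Finset.card_univ, nsmul_eq_mul] using
      Finset.sum_le_card_nsmul Finset.univ (fun i => ‖x i‖ ^ 2) (|x j| ^ 2)
        fun i _ => by gcongr; exact hj i
  calc ‖x‖ ≤ √(Fintype.card ι * |x j| ^ 2) := by
        rw [EuclideanSpace.norm_eq]; exact Real.sqrt_le_sqrt hsum
    _ = √(Fintype.card ι) * |x j| := by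
        rw [Real.sqrt_mul (by positivity), Real.sqrt_sq (abs_nonneg _)]
    _ ≤ Fintype.card ι * |x j| := by
        gcongr; exact (Real.sqrt_le_left (by positivity)).mpr (by nlinarith)

theorem pow_norm_mul_le_of_forall_monomial_mul_le {ι : Type*} [Fintype ι] [Nonempty ι]
    (x : EuclideanSpace ℝ ι) {r K C b : ℝ} (hb0 : 0 ≤ b)
    (hb : ∀ α : ι → ℕ, |∏ j, x j ^ α j| * b ≤ K * C ^ (∑ j, α j) * (∏ j, ((α j)! : ℝ)) ^ r)
    (n : ℕ) : ‖x‖ ^ n * b ≤ K * (Fintype.card ι * C) ^ n * (n ! : ℝ) ^ r := by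
  classical
  obtain ⟨j, -, hj⟩ := Finset.exists_max_image Finset.univ (fun i => |x i|) Finset.univ_nonempty
  have hfact : ∏ i, (((Pi.single j n : ι → ℕ) i)! : ℝ) = n ! :=
    (Fintype.prod_eq_single j fun i hi => by simp [hi]).trans (by simp)
  have hcoord : |x j| ^ n * b ≤ K * C ^ n * (n ! : ℝ) ^ r := by
    have := hb (Pi.single j n)
    rw [hfact] at this
    simpa [Pi.single_apply, abs_pow] using this
  calc ‖x‖ ^ n * b ≤ (Fintype.card ι * |x j|) ^ n * b := by
        gcongr; exact EuclideanSpace.norm_le_card_mul_abs x fun i => hj i (Finset.mem_univ i)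
    _ = (Fintype.card ι : ℝ) ^ n * (|x j| ^ n * b) := by ring
    _ ≤ (Fintype.card ι : ℝ) ^ n * (K * C ^ n * (n ! : ℝ) ^ r) := by gcongr
    _ = K * (Fintype.card ι * C) ^ n * (n ! : ℝ) ^ r := by ring

theorem moment_bounds_imply_decay_general (d : ℕ) (r : ℝ) (hr : 0 < r)
    (h : EuclideanSpace ℝ (Fin d) → ℂ)
    (C K : ℝ) (hC : 0 < C) (hK : 0 < K)
    (hb : ∀ (x : EuclideanSpace ℝ (Fin d)) (α : Fin d → ℕ),
      |∏ j, x j ^ α j| * ‖h x‖ ≤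
        K * C ^ (∑ j, α j) * (∏ j, (Nat.factorial (α j) : ℝ)) ^ (r : ℝ)) :
    ∀ ε : ℝ, 0 < ε → ε < r * ((d : ℝ) * C) ^ (-(1 / r)) →
      ∃ K' > 0, ∀ x : EuclideanSpace ℝ (Fin d),
        ‖h x‖ ≤ K' * Real.exp (-ε * ‖x‖ ^ (1 / r)) := by
  intro ε hε hεlt
  have hd : 0 < d := by
    rcases Nat.eq_zero_or_pos d with rfl | hd
    · rw [Nat.cast_zero, zero_mul, zero_rpow (neg_ne_zero.mpr (by positivity)), mul_zero] at hεlt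
      exact absurd hεlt hε.not_gt
    · exact hd
  have : Nonempty (Fin d) := ⟨⟨0, hd⟩⟩
  obtain ⟨K', hK', hdecay⟩ :=
    exists_le_mul_exp_of_forall_pow_mul_le hr (by positivity : (0 : ℝ) < d * C) hK hεlt
  refine ⟨K', hK', fun x => hdecay _ _ (norm_nonneg x) fun n => ?_⟩
  simpa using pow_norm_mul_le_of_forall_monomial_mul_le x (norm_nonneg _) (hb x) n

/-- If a continuous `h : ℝ^d → ℂ` satisfies the moment bounds
`|x^α h(x)| ≤ K C^{|α|} (α!)^r`, then for every `0 < ε < r (dC)^{-1/r}` there is `K'` with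
`|h(x)| ≤ K' exp(-ε |x|^{1/r})`. -/
theorem moment_bounds_imply_decay (d : ℕ) (r : ℝ) (hr : 0 < r)
    (h : EuclideanSpace ℝ (Fin d) → ℂ) (hc : Continuous h)
    (C K : ℝ) (hC : 0 < C) (hK : 0 < K)
    (hb : ∀ (x : EuclideanSpace ℝ (Fin d)) (α : Fin d → ℕ),
      |∏ j, x j ^ α j| * ‖h x‖ ≤
        K * C ^ (∑ j, α j) * (∏ j, (Nat.factorial (α j) : ℝ)) ^ (r : ℝ)) :
    ∀ ε : ℝ, 0 < ε → ε < r * ((d : ℝ) * C) ^ (-(1 / r)) →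
      ∃ K' > 0, ∀ x : EuclideanSpace ℝ (Fin d),
        ‖h x‖ ≤ K' * Real.exp (-ε * ‖x‖ ^ (1 / r)) :=
  moment_bounds_imply_decay_general d r hr h C K hC hK hb
end

section
/- Let s > 0, ε > 0, d ≥ 1, and let Λ ⊆ ℝ^{2d} be a lattice. Suppose a sequence a : Λ → ℂ satisfies |a(λ)| ≤ C·exp(−ε|λ|^{1/s}) for all λ ∈ Λ, with some C > 0. If |a|_n denotes the n-th largest value among the |a(λ)| (a nonincreasing rearrangement), then there exist constants C' > 0 and ε' > 0 such that |a|_n ≤ C'·exp(−ε' n^{1/(2ds)}) for all n ≥ 1. -/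
/-!
If `|a|_n = x > 0`, the `n` lattice points carrying the `n` largest values all satisfy
`x ≤ C exp(-ε |λ|^{1/s})`, i.e. they lie in the ball of radius `(log (C/x) / ε)^s`. Since `A` is
invertible, such a ball contains at most `O((1 + log (C/x) / ε)^{2ds})` lattice points, so
`n^{1/(2ds)} ≲ 1 + log (C/x) / ε`, and solving for `x` gives the stretched-exponential decay.
-/

/-- The point `A m` of the lattice `A ℤ^n ⊆ ℝ^n`, viewed in Euclidean space. -/
noncomputable def latticePoint {n : ℕ} (A : Matrix (Fin n) (Fin n) ℝ) (m : Fin n → ℤ) :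
    EuclideanSpace ℝ (Fin n) :=
  (WithLp.equiv 2 (Fin n → ℝ)).symm (A.mulVec fun i => (m i : ℝ))

open Finset Real

lemma exists_abs_le_mul_norm_latticePoint {n : ℕ} {A : Matrix (Fin n) (Fin n) ℝ}
    (hA : IsUnit A.det) :
    ∃ c, 0 ≤ c ∧ ∀ (m : Fin n → ℤ) (i : Fin n), |(m i : ℝ)| ≤ c * ‖latticePoint A m‖ := by
  let L := LinearMap.toContinuousLinearMap (Matrix.toLpLin 2 2 A⁻¹)
  refine ⟨‖L‖, norm_nonneg _, fun m i => ?_⟩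
  have hL : L (latticePoint A m) = WithLp.toLp 2 (fun i => (m i : ℝ)) := by
    simp [L, latticePoint, Matrix.toLpLin_apply, Matrix.mulVec_mulVec,
      Matrix.nonsing_inv_mul A hA]
  calc |(m i : ℝ)| = ‖(WithLp.toLp 2 (fun i => (m i : ℝ))).ofLp i‖ := rfl
    _ ≤ ‖WithLp.toLp 2 (fun i => (m i : ℝ))‖ := PiLp.norm_apply_le _ _
    _ = ‖L (latticePoint A m)‖ := by rw [hL]
    _ ≤ ‖L‖ * ‖latticePoint A m‖ := L.le_opNorm _

lemma card_le_two_mul_add_one_pow_of_abs_le {ι : Type*} [Fintype ι] [DecidableEq ι]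
    (s : Finset (ι → ℤ)) {r : ℝ} (hr : 0 ≤ r) (hs : ∀ m ∈ s, ∀ i, |(m i : ℝ)| ≤ r) :
    (#s : ℝ) ≤ (2 * r + 1) ^ Fintype.card ι := by
  set M : ℕ := ⌊r⌋₊
  have hsub : s ⊆ Icc (fun _ => -(M : ℤ)) (fun _ => (M : ℤ)) := by
    intro m hm
    have hM : ∀ i, |m i| ≤ M := fun i => by
      rw [Int.natCast_floor_eq_floor hr, Int.le_floor, Int.cast_abs]
      exact hs m hm i
    simp only [mem_Icc]
    exact ⟨fun i => neg_le_of_abs_le (hM i), fun i => le_of_abs_le (hM i)⟩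
  have hbox : #(Icc (fun _ : ι => -(M : ℤ)) (fun _ => (M : ℤ))) = (2 * M + 1) ^ Fintype.card ι := by
    rw [Pi.card_Icc, Finset.prod_const, Int.card_Icc, Finset.card_univ]
    congr 1
    omega
  calc (#s : ℝ) ≤ ((2 * M + 1) ^ Fintype.card ι : ℕ) := by
        exact_mod_cast hbox ▸ card_le_card hsub
    _ ≤ (2 * r + 1) ^ Fintype.card ι := by
        push_cast
        gcongr
        exact Nat.floor_le hr

lemma exists_card_le_of_norm_latticePoint_le {n : ℕ} {A : Matrix (Fin n) (Fin n) ℝ}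
    (hA : IsUnit A.det) :
    ∃ B > 0, ∀ (s : Finset (Fin n → ℤ)) (R : ℝ), 1 ≤ R →
      (∀ m ∈ s, ‖latticePoint A m‖ ≤ R) → (#s : ℝ) ≤ (B * R) ^ n := by
  obtain ⟨c, hc, hcm⟩ := exists_abs_le_mul_norm_latticePoint hA
  refine ⟨2 * c + 1, by positivity, fun s R hR hsR => ?_⟩
  calc (#s : ℝ) ≤ (2 * (c * R) + 1) ^ n := by
        simpa using card_le_two_mul_add_one_pow_of_abs_le s (by positivity)
          fun m hm i => (hcm m i).trans (by gcongr; exact hsR m hm)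
    _ ≤ ((2 * c + 1) * R) ^ n := by gcongr; nlinarith

lemma le_log_div_of_le_mul_exp_neg {x C t : ℝ} (hx : 0 < x) (h : x ≤ C * exp (-t)) :
    t ≤ log (C / x) := by
  have hC : 0 < C := pos_of_mul_pos_left (hx.trans_le h) (exp_pos _).le
  rw [le_log_iff_exp_le (by positivity), le_div_iff₀ hx]
  calc exp t * x ≤ exp t * (C * exp (-t)) := by gcongr
    _ = C := by rw [mul_left_comm, ← exp_add, add_neg_cancel, exp_zero, mul_one]

lemma le_one_add_rpow_of_rpow_one_div_le {r ρ s : ℝ} (hr : 0 ≤ r) (hs : 0 < s)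
    (h : r ^ (1 / s) ≤ ρ) : r ≤ (1 + ρ) ^ s := by
  have hρ : 0 ≤ ρ := (rpow_nonneg hr _).trans h
  calc r = (r ^ (1 / s)) ^ s := by rw [← rpow_mul hr, one_div_mul_cancel hs.ne', rpow_one]
    _ ≤ ρ ^ s := rpow_le_rpow (rpow_nonneg hr _) h hs.le
    _ ≤ (1 + ρ) ^ s := rpow_le_rpow hρ (by linarith) hs.le

lemma rpow_one_div_mul_le_of_le_pow {t B y s : ℝ} {k : ℕ} (hk : k ≠ 0) (ht : 0 ≤ t)
    (hB : 0 ≤ B) (hy : 0 ≤ y) (hs : 0 < s) (h : t ≤ (B * y ^ s) ^ k) :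
    t ^ (1 / (k * s)) ≤ B ^ (1 / s) * y := by
  have hBy : 0 ≤ B * y ^ s := by positivity
  calc t ^ (1 / (k * s)) = (t ^ (k : ℝ)⁻¹) ^ (1 / s) := by
        rw [← rpow_mul ht]; congr 1; field_simp
    _ ≤ (B * y ^ s) ^ (1 / s) := by
        gcongr
        calc t ^ (k : ℝ)⁻¹ ≤ ((B * y ^ s) ^ k) ^ (k : ℝ)⁻¹ := by gcongr
          _ = B * y ^ s := pow_rpow_inv_natCast hBy hk
    _ = B ^ (1 / s) * y := by
        rw [mul_rpow hB (rpow_nonneg hy _), ← rpow_mul hy, mul_one_div_cancel hs.ne', rpow_one]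

lemma le_mul_exp_mul_exp_neg_of_le_add_log {x C ε y : ℝ} (hx : 0 < x) (hC : 0 < C)
    (h : y ≤ ε + log (C / x)) : x ≤ C * exp ε * exp (-y) := by
  rw [exp_neg, ← div_eq_mul_inv, le_div_iff₀ (exp_pos _)]
  calc x * exp y ≤ x * exp (ε + log (C / x)) := by gcongr
    _ = C * exp ε := by rw [exp_add, exp_log (by positivity)]; field_simp

/-- If a lattice sequence satisfies `|a(λ)| ≤ C exp(-ε |λ|^{1/s})`, then its nonincreasing
rearrangement (given by an enumeration `e` along which `|a|` is antitone) satisfies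
`|a|_n ≤ C' exp(-ε' n^{1/(2ds)})`. -/
theorem exp_sparsity_of_rearrangement (d : ℕ) (hd : 1 ≤ d)
    (A : Matrix (Fin (2 * d)) (Fin (2 * d)) ℝ) (hA : IsUnit A.det)
    (s ε C : ℝ) (hs : 0 < s) (hε : 0 < ε) (hC : 0 < C)
    (a : (Fin (2 * d) → ℤ) → ℂ)
    (hb : ∀ m : Fin (2 * d) → ℤ, ‖a m‖ ≤ C * Real.exp (-ε * ‖latticePoint A m‖ ^ (1 / s)))
    (e : ℕ ≃ (Fin (2 * d) → ℤ)) (he : Antitone fun n : ℕ => ‖a (e n)‖) :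
    ∃ C' > 0, ∃ ε' > 0, ∀ n : ℕ, 1 ≤ n →
      ‖a (e (n - 1))‖ ≤ C' * Real.exp (-ε' * (n : ℝ) ^ (1 / (2 * (d : ℝ) * s))) := by
  obtain ⟨B, hB, hcount⟩ := exists_card_le_of_norm_latticePoint_le hA
  refine ⟨C * exp ε, by positivity, ε / B ^ (1 / s), by positivity, fun n hn => ?_⟩
  rcases (norm_nonneg (a (e (n - 1)))).eq_or_lt with hx | hx
  · rw [← hx]; positivity
  set x := ‖a (e (n - 1))‖
  set ρ := log (C / x) / ε
  have hρ : ∀ k < n, ‖latticePoint A (e k)‖ ^ (1 / s) ≤ ρ := fun k hk => by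
    rw [le_div_iff₀ hε, mul_comm]
    refine le_log_div_of_le_mul_exp_neg hx ?_
    rw [← neg_mul]
    exact (he (by omega : k ≤ n - 1)).trans (hb (e k))
  have hρ0 : 0 ≤ ρ := (rpow_nonneg (norm_nonneg _) _).trans (hρ 0 hn)
  have hcard : (n : ℝ) ≤ (B * (1 + ρ) ^ s) ^ (2 * d) := by
    simpa using hcount ((range n).map e.toEmbedding) _ (one_le_rpow (by linarith) hs.le)
      (forall_mem_map.mpr fun k hk =>
        le_one_add_rpow_of_rpow_one_div_le (norm_nonneg _) hs (hρ k (mem_range.mp hk)))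
  have hgrowth := rpow_one_div_mul_le_of_le_pow (by omega : 2 * d ≠ 0) n.cast_nonneg hB.le
    (by linarith) hs hcard
  push_cast at hgrowth
  rw [neg_mul]
  refine le_mul_exp_mul_exp_neg_of_le_add_log hx hC ?_
  calc ε / B ^ (1 / s) * (n : ℝ) ^ (1 / (2 * (d : ℝ) * s))
      ≤ ε / B ^ (1 / s) * (B ^ (1 / s) * (1 + ρ)) := by gcongr
    _ = ε + log (C / x) := by simp only [ρ]; field_simp
end

section
/- Let ν ≥ 1, C > 0, t ≥ 0, and let σ : ℂ^d → ℂ be entire with |σ(ζ)| ≤ exp(C t (1 + |Im ζ|)^ν) for all ζ ∈ ℂ^d. Set s = 1 − 1/ν. Then there exists a constant C' > 0 (depending on C, d, ν but not on t, α) such that for every ξ ∈ ℝ^d and every multi-index α ∈ ℕ^d, |∂^α σ(ξ)| ≤ C'^{(t+1)|α| + t} (α!)^s. -/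
/-- The partial derivative in the `j`-th coordinate direction. -/
noncomputable def pderivC {d : ℕ} (j : Fin d) (f : (Fin d → ℂ) → ℂ) : (Fin d → ℂ) → ℂ :=
  fun x => fderiv ℂ f x (Pi.single j 1)

/-- The multi-index partial derivative `∂^α`. -/
noncomputable def multiPDeriv {d : ℕ} (α : Fin d → ℕ) (f : (Fin d → ℂ) → ℂ) :
    (Fin d → ℂ) → ℂ :=
  (List.finRange d).foldr (fun j g => (pderivC j)^[α j] g) f

/-!
On the polydisk of polyradius `R` around a real point `ξ`, every coordinate satisfies
`|Im ζⱼ| ≤ R`, so `|σ| ≤ exp (C t (1 + √d R)^ν) ≤ exp (C t (1 + √d)^ν R^ν)` there, and the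
Cauchy estimate in each variable in turn gives `|∂^α σ(ξ)| ≤ α! · sup |σ| / R^|α|`.
Choosing `R = (1 + |α|)^(1/ν)` turns the supremum into `K^(t (1 + |α|))` with
`K = exp (C (1 + √d)^ν)`, while `α! ≤ |α|^|α| ≤ R^(ν |α|)` gives `α! / R^|α| ≤ (α!)^(1 - 1/ν)`.
-/

open Metric Set Real Complex
open scoped Interval

section CauchyEstimate

variable {E F : Type*} [NormedAddCommGroup E] [NormedSpace ℂ E]
  [NormedAddCommGroup F] [NormedSpace ℂ F] {f : E → F}

theorem hasDerivAt_comp_add_smul {x v : E} {u : ℂ} (hf : DifferentiableAt ℂ f (x + u • v)) :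
    HasDerivAt (fun w : ℂ => f (x + w • v)) (fderiv ℂ f (x + u • v) v) u := by
  have hline : HasDerivAt (fun w : ℂ => x + w • v) v u := by
    simpa using ((hasDerivAt_id u).smul_const v).const_add x
  exact hf.hasFDerivAt.comp_hasDerivAt u hline

theorem norm_fderiv_le_of_forall_mem_closedBall (hf : Differentiable ℂ f) {x : E} {r M : ℝ}
    (hr : 0 < r) (hM : ∀ y ∈ closedBall x r, ‖f y‖ ≤ M) : ‖fderiv ℂ f x‖ ≤ M / r := by
  have hM0 : 0 ≤ M := (norm_nonneg _).trans (hM x (mem_closedBall_self hr.le))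
  refine ContinuousLinearMap.opNorm_le_bound _ (by positivity) fun v => ?_
  rcases eq_or_ne v 0 with rfl | hv
  · simp
  have hv' : 0 < ‖v‖ := norm_pos_iff.mpr hv
  have hslice : Differentiable ℂ fun w : ℂ => f (x + w • v) := fun u =>
    (hasDerivAt_comp_add_smul (hf _)).differentiableAt
  have hcauchy := Complex.norm_deriv_le_of_forall_mem_sphere_norm_le (c := 0)
    (R := r / ‖v‖) (by positivity) hslice.diffContOnCl fun w hw => hM _ <| by
      rw [mem_sphere_zero_iff_norm] at hw
      rw [mem_closedBall, dist_eq_norm, add_sub_cancel_left, norm_smul, hw,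
        div_mul_cancel₀ _ hv'.ne']
  rw [(hasDerivAt_comp_add_smul (by simpa using hf x)).deriv] at hcauchy
  simpa [div_div_eq_mul_div, mul_div_right_comm] using hcauchy

end CauchyEstimate

section HolomorphicDerivative

variable {E : Type*} [NormedAddCommGroup E] [NormedSpace ℂ E] [FiniteDimensional ℂ E]
  {f : E → ℂ}

theorem differentiable_intervalIntegral_mul_comp_add (hf : Differentiable ℂ f)
    {k : ℝ → ℂ} (hk : Continuous k) {γ : ℝ → E} (hγ : Continuous γ) (a b : ℝ) :
    Differentiable ℂ fun x => ∫ θ in a..b, k θ * f (x + γ θ) := by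
  intro x₀
  borelize E
  obtain ⟨B, hB⟩ := (isCompact_uIcc (a := a) (b := b)).exists_bound_of_continuousOn
    hγ.continuousOn
  obtain ⟨M, hM⟩ := (isCompact_closedBall x₀ (B + 2)).exists_bound_of_continuousOn
    hf.continuous.continuousOn
  have hfderiv : ∀ θ ∈ Ι a b, ∀ x ∈ ball x₀ 1, ‖fderiv ℂ f (x + γ θ)‖ ≤ M := by
    intro θ hθ x hx
    have hγθ := hB θ (uIoc_subset_uIcc hθ)
    have hdist : dist (x + γ θ) x₀ ≤ ‖γ θ‖ + dist x x₀ :=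
      (dist_triangle _ x _).trans_eq (by rw [dist_self_add_left])
    have hsub : closedBall (x + γ θ) 1 ⊆ closedBall x₀ (B + 2) :=
      closedBall_subset_closedBall' (by linarith [mem_ball.mp hx])
    simpa using norm_fderiv_le_of_forall_mem_closedBall hf one_pos fun y hy => hM y (hsub hy)
  have hcont : ∀ x, Continuous fun θ => k θ * f (x + γ θ) := fun x =>
    hk.mul (hf.continuous.comp (continuous_const.add hγ))
  refine (intervalIntegral.hasFDerivAt_integral_of_dominated_of_fderiv_le
    (F' := fun x θ => k θ • fderiv ℂ f (x + γ θ)) (bound := fun θ => ‖k θ‖ * M)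
    (ball_mem_nhds x₀ one_pos) (.of_forall fun x => (hcont x).aestronglyMeasurable)
    ((hcont x₀).intervalIntegrable _ _)
    (hk.aestronglyMeasurable.smul ((measurable_fderiv ℂ f).comp
      (continuous_const.add hγ).measurable).aestronglyMeasurable)
    (.of_forall fun θ hθ x hx => ?_) ((hk.norm.mul continuous_const).intervalIntegrable _ _)
    (.of_forall fun θ _ x _ => ?_)).differentiableAt
  · rw [norm_smul]
    exact mul_le_mul_of_nonneg_left (hfderiv θ hθ x hx) (norm_nonneg _)
  · simpa using ((hf _).hasFDerivAt.comp x ((hasFDerivAt_id x).add_const (γ θ))).const_mul (k θ)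

/-- Cauchy's formula on the complex line `w ↦ x + w • v` writes `fderiv ℂ f x v` as an integral
over the circle whose integrand is differentiable in `x`. -/
theorem Differentiable.differentiable_fderiv_apply (hf : Differentiable ℂ f) (v : E) :
    Differentiable ℂ fun x => fderiv ℂ f x v := by
  have hrepr : ∀ x, fderiv ℂ f x v = (2 * π * I)⁻¹ • ∫ θ in (0)..2 * π,
      (circleMap 0 1 θ * I / circleMap 0 1 θ ^ 2) * f (x + circleMap 0 1 θ • v) := by
    intro x
    have hslice : Differentiable ℂ fun w : ℂ => f (x + w • v) := fun u =>
      (hasDerivAt_comp_add_smul (hf _)).differentiableAt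
    have := hslice.diffContOnCl.deriv_eq_smul_circleIntegral (c := 0) one_pos
    rw [(hasDerivAt_comp_add_smul (by simpa using hf x)).deriv] at this
    simp only [zero_smul, add_zero] at this
    rw [eq_inv_smul_iff₀ (by simp [pi_ne_zero]), ← this]
    simp [circleIntegral, deriv_circleMap, div_eq_mul_inv, mul_assoc]
  simp_rw [hrepr]
  refine (differentiable_intervalIntegral_mul_comp_add hf ?_ ?_ _ _).fun_const_smul _
  · exact ((continuous_circleMap 0 1).mul continuous_const).div
      ((continuous_circleMap 0 1).pow 2) fun θ => pow_ne_zero _ (circleMap_ne_center one_ne_zero)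
  · exact (continuous_circleMap 0 1).smul continuous_const

end HolomorphicDerivative

section PartialDerivatives

variable {d : ℕ} {f : (Fin d → ℂ) → ℂ}

theorem differentiable_pderivC (hf : Differentiable ℂ f) (j : Fin d) :
    Differentiable ℂ (pderivC j f) :=
  hf.differentiable_fderiv_apply _

theorem differentiable_iterate_pderivC (hf : Differentiable ℂ f) (j : Fin d) (k : ℕ) :
    Differentiable ℂ ((pderivC j)^[k] f) :=
  Function.Iterate.rec _ hf (fun _ hg => differentiable_pderivC hg j) k

theorem differentiable_foldr_iterate_pderivC (hf : Differentiable ℂ f) (α : Fin d → ℕ)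
    (l : List (Fin d)) : Differentiable ℂ (l.foldr (fun j g => (pderivC j)^[α j] g) f) := by
  induction l with
  | nil => exact hf
  | cons j l ih => exact differentiable_iterate_pderivC ih j (α j)

theorem iterate_pderivC_update (hf : Differentiable ℂ f) (z : Fin d → ℂ) (j : Fin d) (k : ℕ)
    (u : ℂ) :
    (pderivC j)^[k] f (Function.update z j u) =
      deriv^[k] (fun u => f (Function.update z j u)) u := by
  induction k generalizing f with
  | zero => rfl
  | succ k ih =>
    have hslice : (fun u => pderivC j f (Function.update z j u)) =
        deriv fun u => f (Function.update z j u) :=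
      funext fun u => ((hf _).hasFDerivAt.comp_hasDerivAt u (hasDerivAt_update z j u)).deriv.symm
    rw [Function.iterate_succ_apply, ih (differentiable_pderivC hf j), hslice,
      Function.iterate_succ_apply]

theorem norm_iterate_pderivC_le (hf : Differentiable ℂ f) {z : Fin d → ℂ} {j : Fin d}
    {R M : ℝ} (hR : 0 < R) (hM : ∀ u ∈ sphere (z j) R, ‖f (Function.update z j u)‖ ≤ M)
    (k : ℕ) : ‖(pderivC j)^[k] f z‖ ≤ k.factorial * M / R ^ k := by
  have hslice : Differentiable ℂ fun u => f (Function.update z j u) := fun u =>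
    ((hf _).hasFDerivAt.comp_hasDerivAt u (hasDerivAt_update z j u)).differentiableAt
  conv_lhs => rw [← Function.update_eq_self j z, iterate_pderivC_update hf,
    ← iteratedDeriv_eq_iterate]
  exact Complex.norm_iteratedDeriv_le_of_forall_mem_sphere_norm_le k hR hslice.diffContOnCl hM

/-- Only the coordinates in `l` range over a disk: the induction moves the `j`-th coordinate of
`z` onto a circle before applying the hypothesis to the remaining list. -/
theorem norm_foldr_iterate_pderivC_le (hf : Differentiable ℂ f) (α : Fin d → ℕ)
    {l : List (Fin d)} (hl : l.Nodup) {R M : ℝ} (hR : 0 < R) {z : Fin d → ℂ}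
    (hM : ∀ w, (∀ i ∈ l, dist (w i) (z i) ≤ R) → (∀ i ∉ l, w i = z i) → ‖f w‖ ≤ M) :
    ‖l.foldr (fun j g => (pderivC j)^[α j] g) f z‖ ≤
      (l.map fun j => ((α j).factorial : ℝ)).prod * M / R ^ (l.map α).sum := by
  induction l generalizing z with
  | nil => simpa using hM z (by simp) fun _ _ => rfl
  | cons j l ih =>
    obtain ⟨hjl, hl⟩ := List.nodup_cons.mp hl
    have hsphere : ∀ u ∈ sphere (z j) R,
        ‖l.foldr (fun j g => (pderivC j)^[α j] g) f (Function.update z j u)‖ ≤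
          (l.map fun j => ((α j).factorial : ℝ)).prod * M / R ^ (l.map α).sum := by
      intro u hu
      refine ih hl fun w hwl hwo => hM w (fun i hi => ?_) fun i hi => ?_
      · rcases List.mem_cons.mp hi with rfl | hi
        · rw [hwo i hjl, Function.update_self]
          exact (mem_sphere.mp hu).le
        · have hij : i ≠ j := ne_of_mem_of_not_mem hi hjl
          simpa [Function.update_of_ne hij] using hwl i hi
      · rw [List.mem_cons, not_or] at hi
        rw [hwo i hi.2, Function.update_of_ne hi.1]
    calc _ ≤ (α j).factorial * ((l.map fun j => ((α j).factorial : ℝ)).prod * M /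
          R ^ (l.map α).sum) / R ^ α j :=
          norm_iterate_pderivC_le (differentiable_foldr_iterate_pderivC hf α l) hR hsphere _
      _ = _ := by
        simp only [List.map_cons, List.prod_cons, List.sum_cons, pow_add]
        field_simp

theorem norm_multiPDeriv_le (hf : Differentiable ℂ f) (α : Fin d → ℕ) {R M : ℝ} (hR : 0 < R)
    {z : Fin d → ℂ} (hM : ∀ w ∈ closedBall z R, ‖f w‖ ≤ M) :
    ‖multiPDeriv α f z‖ ≤ (∏ j, ((α j).factorial : ℝ)) * M / R ^ ∑ j, α j := by
  rw [Fin.prod_univ_def, Fin.sum_univ_def]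
  exact norm_foldr_iterate_pderivC_le hf α (List.nodup_finRange d) hR fun w hw _ =>
    hM w (mem_closedBall.mpr ((dist_pi_le_iff hR.le).mpr fun i => hw i (List.mem_finRange i)))

end PartialDerivatives

theorem Finset.prod_factorial_le_pow_sum {ι : Type*} (s : Finset ι) (α : ι → ℕ) :
    ∏ i ∈ s, (α i).factorial ≤ (∑ i ∈ s, α i) ^ ∑ i ∈ s, α i :=
  (Nat.le_of_dvd (Nat.factorial_pos _) (Nat.prod_factorial_dvd_factorial_sum s α)).trans
    (Nat.factorial_le_pow _)

theorem div_le_rpow_one_sub_inv {P Q ν : ℝ} (hP : 0 < P) (hQ : 0 ≤ Q) (hν : 0 < ν)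
    (h : P ≤ Q ^ ν) : P / Q ≤ P ^ (1 - 1 / ν) := by
  have hroot : P ^ (1 / ν) ≤ Q :=
    calc P ^ (1 / ν) ≤ (Q ^ ν) ^ (1 / ν) := rpow_le_rpow hP.le h (by positivity)
      _ = Q := by rw [← rpow_mul hQ, mul_one_div_cancel hν.ne', rpow_one]
  rw [rpow_sub hP, rpow_one]
  exact div_le_div_of_nonneg_left hP.le (rpow_pos_of_pos hP _) hroot

theorem one_add_mul_rpow_le {a R ν : ℝ} (ha : 0 ≤ a) (hR : 1 ≤ R) (hν : 0 ≤ ν) :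
    (1 + a * R) ^ ν ≤ (1 + a) ^ ν * R ^ ν := by
  rw [← mul_rpow (by positivity) (by positivity)]
  exact rpow_le_rpow (by positivity) (by nlinarith) hν

theorem sqrt_sum_im_sq_le {ι : Type*} [Fintype ι] {ξ : ι → ℝ} {w : ι → ℂ} {R : ℝ}
    (hw : w ∈ closedBall (fun j => (ξ j : ℂ)) R) :
    √(∑ j, (w j).im ^ 2) ≤ √(Fintype.card ι) * R := by
  have hR : 0 ≤ R := dist_nonneg.trans hw
  have him : ∀ j, (w j).im ^ 2 ≤ R ^ 2 := fun j => by
    have : |(w j).im| ≤ R :=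
      calc |(w j).im| = |(w j - ξ j).im| := by simp
        _ ≤ ‖w j - ξ j‖ := abs_im_le_norm _
        _ ≤ R := by rw [← dist_eq_norm]; exact (dist_le_pi_dist w _ j).trans hw
    exact sq_le_sq' (abs_le.mp this).1 (abs_le.mp this).2
  calc √(∑ j, (w j).im ^ 2) ≤ √(∑ _j : ι, R ^ 2) :=
      sqrt_le_sqrt (Finset.sum_le_sum fun j _ => him j)
    _ = √(Fintype.card ι) * R := by simp [sqrt_mul, sqrt_sq hR]

theorem norm_le_of_mem_closedBall_of_norm_le_exp {ι : Type*} [Fintype ι] {σ : (ι → ℂ) → ℂ}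
    {C t ν R : ℝ} (hC : 0 ≤ C) (ht : 0 ≤ t) (hν : 0 ≤ ν) (hR : 1 ≤ R)
    (hgrowth : ∀ ζ, ‖σ ζ‖ ≤ exp (C * t * (1 + √(∑ j, (ζ j).im ^ 2)) ^ ν))
    {ξ : ι → ℝ} {w : ι → ℂ} (hw : w ∈ closedBall (fun j => (ξ j : ℂ)) R) :
    ‖σ w‖ ≤ exp (C * (1 + √(Fintype.card ι)) ^ ν) ^ (t * R ^ ν) := by
  rw [← exp_mul]
  refine (hgrowth w).trans (exp_le_exp.mpr ?_)
  calc C * t * (1 + √(∑ j, (w j).im ^ 2)) ^ ν ≤ C * t * (1 + √(Fintype.card ι) * R) ^ ν := by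
        gcongr
        exact sqrt_sum_im_sq_le hw
    _ ≤ C * t * ((1 + √(Fintype.card ι)) ^ ν * R ^ ν) := by
        gcongr
        exact one_add_mul_rpow_le (by positivity) hR hν
    _ = C * (1 + √(Fintype.card ι)) ^ ν * (t * R ^ ν) := by ring

/-- If `σ : ℂ^d → ℂ` is entire with `|σ(ζ)| ≤ exp(Ct(1 + |Im ζ|)^ν)`, `ν ≥ 1`, then with
`s = 1 - 1/ν` one has `|∂^α σ(ξ)| ≤ C'^{(t+1)|α| + t} (α!)^s` at real points `ξ`,
with `C'` independent of `t` and `α`. -/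
theorem entire_symbol_gevrey_estimates (d : ℕ) (ν C : ℝ) (hν : 1 ≤ ν) (hC : 0 < C) :
    ∃ C' > 0, ∀ t : ℝ, 0 ≤ t → ∀ σ : (Fin d → ℂ) → ℂ, Differentiable ℂ σ →
      (∀ ζ : Fin d → ℂ,
        ‖σ ζ‖ ≤ Real.exp (C * t * (1 + Real.sqrt (∑ j, (ζ j).im ^ 2)) ^ (ν : ℝ))) →
      ∀ (ξ : Fin d → ℝ) (α : Fin d → ℕ),
        ‖multiPDeriv α σ (fun j => ((ξ j : ℝ) : ℂ))‖ ≤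
          C' ^ ((t + 1) * (∑ j, α j : ℝ) + t) *
            (∏ j, (Nat.factorial (α j) : ℝ)) ^ (1 - 1 / ν) := by
  have hν0 : 0 < ν := by linarith
  set K := exp (C * (1 + √d) ^ ν)
  refine ⟨K, exp_pos _, fun t ht σ hσ hgrowth ξ α => ?_⟩
  set n := ∑ j, α j
  set R : ℝ := (1 + n) ^ (1 / ν)
  have hR : 1 ≤ R := one_le_rpow (by simp) (by positivity)
  have hRν : R ^ ν = 1 + n := by
    rw [← rpow_mul (by positivity), one_div_mul_cancel hν0.ne', rpow_one]
  have hpolydisk : ∀ w ∈ closedBall (fun j => (ξ j : ℂ)) R, ‖σ w‖ ≤ K ^ (t * (1 + n)) :=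
    fun w hw => by
      simpa [hRν] using norm_le_of_mem_closedBall_of_norm_le_exp hC.le ht hν0.le hR hgrowth hw
  have hfactorial : ∏ j, ((α j).factorial : ℝ) ≤ (R ^ n) ^ ν := by
    rw [← rpow_natCast, ← rpow_mul (by positivity), mul_comm, rpow_mul (by positivity), hRν]
    exact_mod_cast (Finset.prod_factorial_le_pow_sum _ _).trans
      (Nat.pow_le_pow_left (Nat.le_add_left _ _) _)
  calc ‖multiPDeriv α σ (fun j => (ξ j : ℂ))‖
      ≤ (∏ j, ((α j).factorial : ℝ)) * K ^ (t * (1 + n)) / R ^ n :=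
        norm_multiPDeriv_le hσ α (by positivity) hpolydisk
    _ = K ^ (t * (1 + n)) * ((∏ j, ((α j).factorial : ℝ)) / R ^ n) := by ring
    _ ≤ K ^ ((t + 1) * n + t) * (∏ j, ((α j).factorial : ℝ)) ^ (1 - 1 / ν) := by
        gcongr
        · exact one_le_exp (by positivity)
        · nlinarith
        · exact div_le_rpow_one_sub_inv (by positivity) (by positivity) hν0 hfactorial
    _ = _ := by simp only [n, Nat.cast_sum]
end
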